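/- Let Λ be a quantum channel on matrices over a finite-dimensional complex Hilbert space ℋ with Kraus operators {K_a}_{a∈[n]}, let P be a positive definite matrix on ℋ such that Λ(P) is positive definite, and let C be a positive definite matrix on the output space. Define M := Λ(P)^{-1} # C and the Gamma map Γ_{Λ,C}[P] := Λ†(M) · P · Λ†(M). Then: (i) if K_a K_b† commutes with M for all a,b ∈ [n], then Λ(Γ_{Λ,C}[P]) = C; and (ii) Λ(Γ_{Λ,C}[P]) = C holds if and only if Γ_{Λ,C}[P] is the unique maximizer of Q ↦ F(P,Q) over the feasible set Λ^{-1}[C] := {Q PSD : Λ(Q) = C}. -/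

import Mathlib

open Matrix Kronecker
open scoped ComplexOrder

noncomputable section

open Classical in
/-- The positive semidefinite square root of a PSD matrix (junk value `0` otherwise). -/
noncomputable def msqrt {n : Type*} [Fintype n] [DecidableEq n] (A : Matrix n n ℂ) :
    Matrix n n ℂ :=
  if h : A.PosSemidef then
    h.1.eigenvectorUnitary.1 * diagonal ((↑) ∘ (√·) ∘ h.1.eigenvalues) *
      (star h.1.eigenvectorUnitary : Matrix n n ℂ)
  else 0

/-- The (square-root) fidelity `F(P,Q) = Tr[√(√Q P √Q)]`. -/
noncomputable def fidelity {n : Type*} [Fintype n] [DecidableEq n]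
    (P Q : Matrix n n ℂ) : ℝ :=
  ((msqrt (msqrt Q * P * msqrt Q)).trace).re

/-- The matrix geometric mean `A # B = A^{1/2} √(A^{-1/2} B A^{-1/2}) A^{1/2}`. -/
noncomputable def geomMean {n : Type*} [Fintype n] [DecidableEq n]
    (A B : Matrix n n ℂ) : Matrix n n ℂ :=
  msqrt A * msqrt ((msqrt A)⁻¹ * B * (msqrt A)⁻¹) * msqrt A


/-!
Write `N = Λ†(M)`. The geometric mean `M = Λ(P)⁻¹ # C` is the positive solution of the Riccati
equation `M Λ(P) M = C`. If every `K_a K_b†` commutes with `M`, then `K_a N = M K_a` because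
`∑ K_b† K_b = 1`, hence `Λ(N P N) = M Λ(P) M = C`.

For the variational statement, the identity
`Tr(A B⁻¹) + Tr B - 2 Tr √A = Tr((√A - B) B⁻¹ (√A - B)) ≥ 0`, applied to `A = √P Q √P` and
`B = √P N √P`, gives `2 F(P,Q) ≤ Tr(Q N⁻¹) + Tr(P N)`, with equality only for `Q = N P N = Γ`,
while `F(P, Γ) = Tr(P N)`. Since `Λ†` is unital,
`Λ†(M⁻¹) - N⁻¹ = ∑ₐ (K_a - M K_a N⁻¹)† M⁻¹ (K_a - M K_a N⁻¹) ≥ 0`, so every feasible `Q` has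
`Tr(Q N⁻¹) ≤ Tr(Q Λ†(M⁻¹)) = Tr(C M⁻¹) = Tr(M Λ(P)) = Tr(P N)`.
-/

namespace Matrix

section

variable {n : Type*} [Fintype n]

lemma PosSemidef.mul_mul_same_of_isHermitian {Q S : Matrix n n ℂ} (hQ : Q.PosSemidef)
    (hS : S.IsHermitian) : (S * Q * S).PosSemidef := by
  simpa only [hS.eq] using hQ.conjTranspose_mul_mul_same S

variable [DecidableEq n]

lemma PosDef.mul_mul_same_of_posDef {N S : Matrix n n ℂ} (hN : N.PosDef) (hS : S.PosDef) :
    (S * N * S).PosDef := by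
  simpa only [star_eq_conjTranspose, hS.isHermitian.eq] using
    (IsUnit.posDef_star_left_conjugate_iff hS.isUnit).mpr hN

lemma IsHermitian.trace_cfc {𝕜 : Type*} [RCLike 𝕜] {A : Matrix n n 𝕜} (hA : A.IsHermitian)
    (f : ℝ → ℝ) : (cfc f A).trace = ∑ i, (f (hA.eigenvalues i) : 𝕜) := by
  rw [hA.cfc_eq, IsHermitian.cfc, Unitary.conjStarAlgAut_apply, trace_mul_cycle,
    Unitary.coe_star_mul_self, one_mul, trace_diagonal]
  rfl

lemma trace_cfc_conjTranspose_mul_self {𝕜 : Type*} [RCLike 𝕜] (X : Matrix n n 𝕜) (f : ℝ → ℝ) :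
    (cfc f (Xᴴ * X)).trace = (cfc f (X * Xᴴ)).trace := by
  have hXX := isHermitian_conjTranspose_mul_self X
  have hXX' := isHermitian_mul_conjTranspose_self X
  rw [hXX.trace_cfc, hXX'.trace_cfc,
    (hXX.eigenvalues_eq_eigenvalues_iff hXX').mpr (charpoly_mul_comm _ _)]

end

end Matrix

section MatrixSqrt

variable {n : Type*} [Fintype n] [DecidableEq n]

lemma msqrt_eq_cfc_sqrt {A : Matrix n n ℂ} (hA : A.PosSemidef) : msqrt A = cfc Real.sqrt A := by
  rw [hA.1.cfc_eq, msqrt, dif_pos hA, IsHermitian.cfc, Unitary.conjStarAlgAut_apply]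
  rfl

open scoped MatrixOrder

lemma msqrt_eq_sqrt {A : Matrix n n ℂ} (hA : A.PosSemidef) : msqrt A = CFC.sqrt A := by
  rw [msqrt_eq_cfc_sqrt hA, CFC.sqrt_eq_real_sqrt A hA.nonneg, cfcₙ_eq_cfc]

lemma posSemidef_msqrt {A : Matrix n n ℂ} (hA : A.PosSemidef) : (msqrt A).PosSemidef := by
  rw [msqrt_eq_sqrt hA]
  exact (CFC.sqrt_nonneg A).posSemidef

lemma msqrt_mul_self {A : Matrix n n ℂ} (hA : A.PosSemidef) : msqrt A * msqrt A = A := by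
  rw [msqrt_eq_sqrt hA]
  exact CFC.sqrt_mul_sqrt_self A hA.nonneg

lemma msqrt_eq_of_mul_self_eq {A B : Matrix n n ℂ} (hB : B.PosSemidef) (h : B * B = A) :
    msqrt A = B := by
  have hA : A.PosSemidef := h ▸ pow_two B ▸ hB.pow 2
  rw [msqrt_eq_sqrt hA]
  exact (CFC.sqrt_eq_iff A B hA.nonneg hB.nonneg).mpr h

lemma posDef_msqrt {A : Matrix n n ℂ} (hA : A.PosDef) : (msqrt A).PosDef :=
  (posSemidef_msqrt hA.posSemidef).posDef_iff_isUnit.mpr <|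
    isUnit_of_mul_isUnit_left ((msqrt_mul_self hA.posSemidef).symm ▸ hA.isUnit)

lemma trace_msqrt_conjTranspose_mul_self (X : Matrix n n ℂ) :
    (msqrt (Xᴴ * X)).trace = (msqrt (X * Xᴴ)).trace := by
  rw [msqrt_eq_cfc_sqrt (posSemidef_conjTranspose_mul_self X),
    msqrt_eq_cfc_sqrt (posSemidef_self_mul_conjTranspose X), trace_cfc_conjTranspose_mul_self]

lemma Matrix.PosSemidef.trace_mul_nonneg {Q D : Matrix n n ℂ} (hQ : Q.PosSemidef)
    (hD : D.PosSemidef) : 0 ≤ (Q * D).trace := by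
  rw [← msqrt_mul_self hQ, Matrix.mul_assoc, trace_mul_comm]
  exact (hD.mul_mul_same_of_isHermitian (posSemidef_msqrt hQ).isHermitian).trace_nonneg

lemma trace_conjTranspose_msqrt_sub_mul_inv_mul {A B : Matrix n n ℂ} (hA : A.PosSemidef)
    (hB : B.PosDef) :
    ((msqrt A - B)ᴴ * B⁻¹ * (msqrt A - B)).trace
      = (A * B⁻¹).trace + B.trace - 2 * (msqrt A).trace := by
  have hdet := (isUnit_iff_isUnit_det B).mp hB.isUnit
  rw [conjTranspose_sub, (posSemidef_msqrt hA).isHermitian.eq, hB.isHermitian.eq]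
  simp only [sub_mul, mul_sub, trace_sub, mul_assoc, nonsing_inv_mul B hdet,
    mul_nonsing_inv B hdet, mul_one, one_mul]
  rw [trace_mul_cycle', ← mul_assoc (msqrt A), msqrt_mul_self hA]
  ring

lemma two_mul_re_trace_msqrt_le {A B : Matrix n n ℂ} (hA : A.PosSemidef) (hB : B.PosDef) :
    2 * (msqrt A).trace.re ≤ (A * B⁻¹).trace.re + B.trace.re := by
  have h := (Complex.nonneg_iff.mp
    (hB.inv.posSemidef.conjTranspose_mul_mul_same (msqrt A - B)).trace_nonneg).1
  rw [trace_conjTranspose_msqrt_sub_mul_inv_mul hA hB] at h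
  simp only [Complex.sub_re, Complex.add_re, Complex.mul_re, Complex.re_ofNat, Complex.im_ofNat, zero_mul, sub_zero] at h
  linarith

lemma msqrt_eq_of_two_mul_re_trace_eq {A B : Matrix n n ℂ} (hA : A.PosSemidef) (hB : B.PosDef)
    (h : 2 * (msqrt A).trace.re = (A * B⁻¹).trace.re + B.trace.re) : msqrt A = B := by
  have hR := posDef_msqrt hB.inv
  have hconj : (msqrt B⁻¹ * (msqrt A - B))ᴴ * (msqrt B⁻¹ * (msqrt A - B))
      = (msqrt A - B)ᴴ * B⁻¹ * (msqrt A - B) := by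
    rw [conjTranspose_mul, hR.isHermitian.eq]
    conv_rhs => rw [← msqrt_mul_self hB.inv.posSemidef]
    simp only [mul_assoc]
  have htrace : ((msqrt B⁻¹ * (msqrt A - B))ᴴ * (msqrt B⁻¹ * (msqrt A - B))).trace = 0 := by
    have him := (Complex.nonneg_iff.mp
      (hB.inv.posSemidef.conjTranspose_mul_mul_same (msqrt A - B)).trace_nonneg).2
    rw [hconj]
    refine Complex.ext ?_ (by simpa using him.symm)
    rw [trace_conjTranspose_msqrt_sub_mul_inv_mul hA hB]
    simp only [Complex.sub_re, Complex.add_re, Complex.mul_re, Complex.re_ofNat, Complex.im_ofNat, zero_mul, sub_zero, Complex.zero_re]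
    linarith
  rwa [trace_conjTranspose_mul_self_eq_zero_iff, hR.isUnit.mul_right_eq_zero, sub_eq_zero]
    at htrace

lemma msqrt_mul_mul_msqrt_mul_self {P : Matrix n n ℂ} (hP : P.PosSemidef) (N : Matrix n n ℂ) :
    msqrt P * N * msqrt P * (msqrt P * N * msqrt P) = msqrt P * (N * P * N) * msqrt P :=
  calc _ = msqrt P * (N * (msqrt P * msqrt P) * N) * msqrt P := by simp only [mul_assoc]
    _ = _ := by rw [msqrt_mul_self hP]

end MatrixSqrt

section GeometricMean

variable {n : Type*} [Fintype n] [DecidableEq n]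

lemma posDef_geomMean {A B : Matrix n n ℂ} (hA : A.PosDef) (hB : B.PosDef) :
    (geomMean A B).PosDef :=
  (posDef_msqrt (hB.mul_mul_same_of_posDef (posDef_msqrt hA).inv)).mul_mul_same_of_posDef
    (posDef_msqrt hA)

lemma geomMean_mul_inv_mul_geomMean {A B : Matrix n n ℂ} (hA : A.PosDef) (hB : B.PosSemidef) :
    geomMean A B * A⁻¹ * geomMean A B = B := by
  have hR := (isUnit_iff_isUnit_det (msqrt A)).mp (posDef_msqrt hA).isUnit
  have hAinv : A⁻¹ = (msqrt A)⁻¹ * (msqrt A)⁻¹ := by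
    rw [← Matrix.mul_inv_rev, msqrt_mul_self hA.posSemidef]
  have hX := msqrt_mul_self (hB.mul_mul_same_of_isHermitian (posDef_msqrt hA).inv.isHermitian)
  rw [geomMean, hAinv]
  generalize msqrt ((msqrt A)⁻¹ * B * (msqrt A)⁻¹) = X at hX ⊢
  calc msqrt A * X * msqrt A * ((msqrt A)⁻¹ * (msqrt A)⁻¹) * (msqrt A * X * msqrt A)
      = msqrt A * (X * X) * msqrt A := by
        simp only [mul_assoc, mul_nonsing_inv_cancel_left _ _ hR, nonsing_inv_mul_cancel_left _ _ hR]
    _ = B := by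
        rw [hX]
        simp only [mul_assoc, mul_nonsing_inv_cancel_left _ _ hR, nonsing_inv_mul _ hR, mul_one]

end GeometricMean

section Fidelity

variable {n : Type*} [Fintype n] [DecidableEq n]

lemma fidelity_comm {P Q : Matrix n n ℂ} (hP : P.PosSemidef) (hQ : Q.PosSemidef) :
    fidelity P Q = fidelity Q P := by
  have hX := trace_msqrt_conjTranspose_mul_self (msqrt P * msqrt Q)
  rw [conjTranspose_mul, (posSemidef_msqrt hP).isHermitian.eq,
    (posSemidef_msqrt hQ).isHermitian.eq] at hX
  have hQPQ : msqrt Q * msqrt P * (msqrt P * msqrt Q) = msqrt Q * P * msqrt Q := by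
    rw [← mul_assoc, mul_assoc (msqrt Q), msqrt_mul_self hP]
  have hPQP : msqrt P * msqrt Q * (msqrt Q * msqrt P) = msqrt P * Q * msqrt P := by
    rw [← mul_assoc, mul_assoc (msqrt P), msqrt_mul_self hQ]
  rw [fidelity, fidelity, ← hQPQ, ← hPQP, hX]

lemma fidelity_mul_mul_self {P N : Matrix n n ℂ} (hP : P.PosSemidef) (hN : N.PosSemidef) :
    fidelity P (N * P * N) = (P * N).trace.re := by
  rw [fidelity_comm hP (hP.mul_mul_same_of_isHermitian hN.isHermitian), fidelity,
    msqrt_eq_of_mul_self_eq (hN.mul_mul_same_of_isHermitian (posSemidef_msqrt hP).isHermitian)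
      (msqrt_mul_mul_msqrt_mul_self hP N),
    trace_mul_cycle, msqrt_mul_self hP]

lemma re_trace_mul_inv_add_re_trace_mul_eq_msqrt_conj {P : Matrix n n ℂ} (hP : P.PosDef)
    (Q N : Matrix n n ℂ) :
    (Q * N⁻¹).trace.re + (P * N).trace.re
      = (msqrt P * Q * msqrt P * (msqrt P * N * msqrt P)⁻¹).trace.re
        + (msqrt P * N * msqrt P).trace.re := by
  have hT := (isUnit_iff_isUnit_det _).mp (posDef_msqrt hP).isUnit
  rw [trace_mul_cycle (msqrt P), msqrt_mul_self hP.posSemidef, Matrix.mul_inv_rev, Matrix.mul_inv_rev]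
  simp only [mul_assoc, mul_nonsing_inv_cancel_left _ _ hT]
  rw [trace_mul_comm (msqrt P), mul_assoc, mul_assoc, nonsing_inv_mul _ hT, mul_one]

lemma two_mul_fidelity_le {P Q N : Matrix n n ℂ} (hP : P.PosDef) (hQ : Q.PosSemidef)
    (hN : N.PosDef) : 2 * fidelity P Q ≤ (Q * N⁻¹).trace.re + (P * N).trace.re := by
  rw [fidelity_comm hP.posSemidef hQ, re_trace_mul_inv_add_re_trace_mul_eq_msqrt_conj hP]
  exact two_mul_re_trace_msqrt_le
    (hQ.mul_mul_same_of_isHermitian (posSemidef_msqrt hP.posSemidef).isHermitian)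
    (hN.mul_mul_same_of_posDef (posDef_msqrt hP))

lemma eq_mul_mul_of_two_mul_fidelity_eq {P Q N : Matrix n n ℂ} (hP : P.PosDef)
    (hQ : Q.PosSemidef) (hN : N.PosDef)
    (h : 2 * fidelity P Q = (Q * N⁻¹).trace.re + (P * N).trace.re) : Q = N * P * N := by
  have hTQT := hQ.mul_mul_same_of_isHermitian (posSemidef_msqrt hP.posSemidef).isHermitian
  rw [fidelity_comm hP.posSemidef hQ, re_trace_mul_inv_add_re_trace_mul_eq_msqrt_conj hP] at h
  have hsq := congrArg (fun X => X * X)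
    (msqrt_eq_of_two_mul_re_trace_eq hTQT (hN.mul_mul_same_of_posDef (posDef_msqrt hP)) h)
  simp only [msqrt_mul_self hTQT, msqrt_mul_mul_msqrt_mul_self hP.posSemidef] at hsq
  have hT := (posDef_msqrt hP).isUnit
  exact hT.mul_left_cancel (hT.mul_right_cancel hsq)

end Fidelity

section Kraus

variable {ι H K : Type*} [Fintype ι] [Fintype K]

def krausMap [Fintype H] (Kr : ι → Matrix K H ℂ) (X : Matrix H H ℂ) : Matrix K K ℂ :=
  ∑ a, Kr a * X * (Kr a)ᴴ

def krausAdjoint (Kr : ι → Matrix K H ℂ) (Y : Matrix K K ℂ) : Matrix H H ℂ :=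
  ∑ a, (Kr a)ᴴ * Y * Kr a

variable (Kr : ι → Matrix K H ℂ)

lemma isHermitian_krausAdjoint {M : Matrix K K ℂ} (hM : M.IsHermitian) :
    (krausAdjoint Kr M).IsHermitian := by
  simp only [IsHermitian, krausAdjoint, conjTranspose_sum, conjTranspose_mul, hM.eq,
    conjTranspose_conjTranspose, Matrix.mul_assoc]

variable [Fintype H]

lemma posSemidef_krausAdjoint {M : Matrix K K ℂ} (hM : M.PosSemidef) :
    (krausAdjoint Kr M).PosSemidef :=
  posSemidef_sum _ fun a _ => hM.conjTranspose_mul_mul_same (Kr a)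

lemma trace_mul_krausAdjoint (X : Matrix H H ℂ) (Y : Matrix K K ℂ) :
    (X * krausAdjoint Kr Y).trace = (krausMap Kr X * Y).trace := by
  simp only [krausAdjoint, krausMap, Finset.mul_sum, Finset.sum_mul, trace_sum]
  refine Finset.sum_congr rfl fun a _ => ?_
  rw [← Matrix.mul_assoc, trace_mul_cycle]
  simp only [Matrix.mul_assoc]

lemma star_dotProduct_krausAdjoint_mulVec (Y : Matrix K K ℂ) (x : H → ℂ) :
    star x ⬝ᵥ krausAdjoint Kr Y *ᵥ x = ∑ a, star (Kr a *ᵥ x) ⬝ᵥ Y *ᵥ (Kr a *ᵥ x) := by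
  simp only [krausAdjoint, sum_mulVec, dotProduct_sum, ← mulVec_mulVec, star_mulVec,
    dotProduct_mulVec, vecMul_vecMul]

variable [DecidableEq H]

lemma posDef_krausAdjoint (hTP : ∑ a, (Kr a)ᴴ * Kr a = 1) {M : Matrix K K ℂ} (hM : M.PosDef) :
    (krausAdjoint Kr M).PosDef := by
  refine .of_dotProduct_mulVec_pos (posSemidef_krausAdjoint Kr hM.posSemidef).isHermitian
    fun x hx => ?_
  obtain ⟨a, ha⟩ : ∃ a, Kr a *ᵥ x ≠ 0 := by
    by_contra! h
    have hx0 : (∑ a, (Kr a)ᴴ * Kr a) *ᵥ x = 0 := by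
      simp [sum_mulVec, ← mulVec_mulVec, h]
    exact hx (by rwa [hTP, one_mulVec] at hx0)
  rw [star_dotProduct_krausAdjoint_mulVec]
  exact Finset.sum_pos' (fun b _ => hM.posSemidef.dotProduct_mulVec_nonneg _)
    ⟨a, Finset.mem_univ a, hM.dotProduct_mulVec_pos ha⟩

lemma mul_krausAdjoint_of_commute (hTP : ∑ a, (Kr a)ᴴ * Kr a = 1) {M : Matrix K K ℂ}
    (hcomm : ∀ a b, Commute (Kr a * (Kr b)ᴴ) M) (a : ι) :
    Kr a * krausAdjoint Kr M = M * Kr a :=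
  calc Kr a * krausAdjoint Kr M = ∑ b, Kr a * (Kr b)ᴴ * M * Kr b := by
        simp only [krausAdjoint, Matrix.mul_sum, Matrix.mul_assoc]
    _ = ∑ b, M * Kr a * ((Kr b)ᴴ * Kr b) := by
        simp only [(hcomm a _).eq, Matrix.mul_assoc]
    _ = M * Kr a := by rw [← Matrix.mul_sum, hTP, Matrix.mul_one]

lemma krausMap_krausAdjoint_mul_mul (hTP : ∑ a, (Kr a)ᴴ * Kr a = 1)
    {M : Matrix K K ℂ} (hM : M.IsHermitian)
    (hcomm : ∀ a b, Commute (Kr a * (Kr b)ᴴ) M) (P : Matrix H H ℂ) :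
    krausMap Kr (krausAdjoint Kr M * P * krausAdjoint Kr M) = M * krausMap Kr P * M := by
  have hKN := mul_krausAdjoint_of_commute Kr hTP hcomm
  have hNK : ∀ a, krausAdjoint Kr M * (Kr a)ᴴ = (Kr a)ᴴ * M := fun a => by
    simpa only [conjTranspose_mul, (isHermitian_krausAdjoint Kr hM).eq, hM.eq] using
      congrArg conjTranspose (hKN a)
  simp only [krausMap, Matrix.mul_sum, Matrix.sum_mul]
  refine Finset.sum_congr rfl fun a _ => ?_
  rw [← Matrix.mul_assoc, ← Matrix.mul_assoc, hKN, Matrix.mul_assoc, Matrix.mul_assoc, hNK]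
  simp only [Matrix.mul_assoc]

variable [DecidableEq K]

lemma posSemidef_krausAdjoint_inv_sub_inv (hTP : ∑ a, (Kr a)ᴴ * Kr a = 1)
    {M : Matrix K K ℂ} (hM : M.PosDef) :
    (krausAdjoint Kr M⁻¹ - (krausAdjoint Kr M)⁻¹).PosSemidef := by
  set N := krausAdjoint Kr M
  have hMdet := (isUnit_iff_isUnit_det M).mp hM.isUnit
  have hNdet := (isUnit_iff_isUnit_det N).mp (posDef_krausAdjoint Kr hTP hM).isUnit
  have hterm : ∀ a, (Kr a - M * Kr a * N⁻¹)ᴴ * M⁻¹ * (Kr a - M * Kr a * N⁻¹)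
      = (Kr a)ᴴ * M⁻¹ * Kr a - (Kr a)ᴴ * Kr a * N⁻¹ - N⁻¹ * ((Kr a)ᴴ * Kr a)
        + N⁻¹ * ((Kr a)ᴴ * M * Kr a) * N⁻¹ := by
    intro a
    rw [conjTranspose_sub, conjTranspose_mul, conjTranspose_mul, hM.isHermitian.eq,
      (isHermitian_krausAdjoint Kr hM.isHermitian).inv.eq]
    simp only [Matrix.sub_mul, Matrix.mul_sub, Matrix.mul_assoc,
      nonsing_inv_mul_cancel_left _ _ hMdet, mul_nonsing_inv_cancel_left _ _ hMdet]
    abel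
  have hsum : krausAdjoint Kr M⁻¹ - N⁻¹
      = ∑ a, (Kr a - M * Kr a * N⁻¹)ᴴ * M⁻¹ * (Kr a - M * Kr a * N⁻¹) := by
    simp only [hterm, Finset.sum_add_distrib, Finset.sum_sub_distrib, ← Finset.sum_mul,
      ← Finset.mul_sum, hTP]
    rw [show ∑ a, (Kr a)ᴴ * M * Kr a = N from rfl, nonsing_inv_mul _ hNdet,
      Matrix.one_mul, Matrix.mul_one, krausAdjoint]
    abel
  rw [hsum]
  exact posSemidef_sum _ fun a _ => hM.inv.posSemidef.conjTranspose_mul_mul_same _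

lemma re_trace_mul_inv_krausAdjoint_le (hTP : ∑ a, (Kr a)ᴴ * Kr a = 1)
    {M : Matrix K K ℂ} (hM : M.PosDef) {Q : Matrix H H ℂ} (hQ : Q.PosSemidef) :
    (Q * (krausAdjoint Kr M)⁻¹).trace.re ≤ (krausMap Kr Q * M⁻¹).trace.re := by
  have h := (Complex.nonneg_iff.mp
    (hQ.trace_mul_nonneg (posSemidef_krausAdjoint_inv_sub_inv Kr hTP hM))).1
  rwa [Matrix.mul_sub, trace_sub, trace_mul_krausAdjoint, Complex.sub_re, sub_nonneg] at h

lemma re_trace_mul_inv_krausAdjoint_le_of_mul_krausMap_mul_eq (hTP : ∑ a, (Kr a)ᴴ * Kr a = 1)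
    {M : Matrix K K ℂ} (hM : M.PosDef) {P Q : Matrix H H ℂ} (hQ : Q.PosSemidef)
    (hPQ : M * krausMap Kr P * M = krausMap Kr Q) :
    (Q * (krausAdjoint Kr M)⁻¹).trace.re ≤ (P * krausAdjoint Kr M).trace.re := by
  have hMdet := (isUnit_iff_isUnit_det M).mp hM.isUnit
  calc (Q * (krausAdjoint Kr M)⁻¹).trace.re ≤ (krausMap Kr Q * M⁻¹).trace.re :=
        re_trace_mul_inv_krausAdjoint_le Kr hTP hM hQ
    _ = (P * krausAdjoint Kr M).trace.re := by
        rw [← hPQ, mul_nonsing_inv_cancel_right _ _ hMdet, trace_mul_comm, trace_mul_krausAdjoint]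

end Kraus

/-- For a quantum channel `Λ` with Kraus operators `Kr a`, a positive
definite input `P` with `Λ P` positive definite, and a positive definite target `C`,
let `M = (Λ P)⁻¹ # C` and `Γ = Λ†(M) P Λ†(M)` be the Gamma map. Then
(i) if every `Kr a * (Kr b)ᴴ` commutes with `M`, the Gamma map is feasible,
`Λ Γ = C`; and (ii) `Λ Γ = C` holds iff `Γ` is the unique maximizer of
`Q ↦ F(P,Q)` over the feasible set `{Q PSD : Λ Q = C}`. -/
theorem gammaMap_feasible_and_projection
    {H K : Type*} [Fintype H] [DecidableEq H] [Fintype K] [DecidableEq K]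
    {m : ℕ} (Kr : Fin m → Matrix K H ℂ)
    (hTP : ∑ a, (Kr a)ᴴ * Kr a = (1 : Matrix H H ℂ))
    (Λ : Matrix H H ℂ → Matrix K K ℂ)
    (hΛ : ∀ X, Λ X = ∑ a, Kr a * X * (Kr a)ᴴ)
    (Λadj : Matrix K K ℂ → Matrix H H ℂ)
    (hΛadj : ∀ Y, Λadj Y = ∑ a, (Kr a)ᴴ * Y * Kr a)
    (P : Matrix H H ℂ) (hP : P.PosDef)
    (C : Matrix K K ℂ) (hC : C.PosDef)
    (hΛP : (Λ P).PosDef)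
    (M : Matrix K K ℂ) (hM : M = geomMean (Λ P)⁻¹ C)
    (Γ : Matrix H H ℂ) (hΓ : Γ = Λadj M * P * Λadj M) :
    ((∀ a b, Commute (Kr a * (Kr b)ᴴ) M) → Λ Γ = C) ∧
    (Λ Γ = C ↔
      (Γ.PosSemidef ∧ Λ Γ = C ∧
        ∀ Q : Matrix H H ℂ, Q.PosSemidef → Λ Q = C →
          fidelity P Q ≤ fidelity P Γ ∧ (fidelity P Q = fidelity P Γ → Q = Γ))) := by
  obtain rfl : Λ = krausMap Kr := funext hΛ
  obtain rfl : Λadj = krausAdjoint Kr := funext hΛadj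
  have hMpd : M.PosDef := hM ▸ posDef_geomMean hΛP.inv hC
  have hMΛPM : M * krausMap Kr P * M = C := by
    have hinv := Matrix.nonsing_inv_nonsing_inv _ ((Matrix.isUnit_iff_isUnit_det _).mp hΛP.isUnit)
    simpa only [hM, hinv] using geomMean_mul_inv_mul_geomMean hΛP.inv hC.posSemidef
  set N := krausAdjoint Kr M
  have hN : N.PosDef := posDef_krausAdjoint Kr hTP hMpd
  have hfidΓ : fidelity P Γ = (P * N).trace.re :=
    hΓ ▸ fidelity_mul_mul_self hP.posSemidef hN.posSemidef
  refine ⟨fun hcomm => ?_, fun hΓC => ⟨?_, hΓC, fun Q hQ hQC => ?_⟩, fun h => h.2.1⟩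
  · rw [hΓ, krausMap_krausAdjoint_mul_mul Kr hTP hMpd.isHermitian hcomm, hMΛPM]
  · exact hΓ ▸ hP.posSemidef.mul_mul_same_of_isHermitian hN.isHermitian
  · have hbound := two_mul_fidelity_le hP hQ hN
    have hfeasQ := re_trace_mul_inv_krausAdjoint_le_of_mul_krausMap_mul_eq Kr hTP hMpd hQ
      (hMΛPM.trans hQC.symm)
    refine ⟨by linarith, fun heq => hΓ ▸ eq_mul_mul_of_two_mul_fidelity_eq hP hQ hN ?_⟩
    linarith
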